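/- arXiv:2003.02743 — 2 statements merged into one kernel-verified Lean document; each statement's English description precedes it below -/
import Mathlib

section
/- Fix an integer n ≥ 1, reals ω₀, ω₁ with |ω₀ − 1/2| + |ω₁| < 1/2, and an initial outcome x₋₁ ∈ {−1,1}. Define p₀ = ω₀ + ω₁x₋₁, p_∞ = (ω₀ − ω₁)/(1 − 2ω₁), λ_n = (1/n)·(1 − (2ω₁)ⁿ)/(1 − 2ω₁), H_n(X) = #{0 ≤ k ≤ n−1 : X_k = 1}, and E(H_n) = Σ_X P(X)·H_n(X). Then E(H_n)/n = λ_n·p₀ + (1 − λ_n)·p_∞. -/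
open Finset

/-- The outcome preceding flip `k` in a path `X ∈ {-1,1}ⁿ` with initial outcome `xm1 = x₋₁`. -/
noncomputable def prevOutcome (n : ℕ) (xm1 : ℝ) (X : Fin n → ({-1, 1} : Finset ℝ))
    (k : Fin n) : ℝ :=
  if (k : ℕ) = 0 then xm1
  else (X ⟨(k : ℕ) - 1, Nat.lt_of_le_of_lt (Nat.sub_le _ _) k.isLt⟩ : ℝ)

/-- The probability `P(X) = ∏ₖ rₖ(X)` of a sample path for the history-cognizant coin
with memory depth 1. -/
noncomputable def coinPathProb (n : ℕ) (ω0 ω1 xm1 : ℝ)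
    (X : Fin n → ({-1, 1} : Finset ℝ)) : ℝ :=
  ∏ k : Fin n,
    if (X k : ℝ) = 1 then ω0 + ω1 * prevOutcome n xm1 X k
    else 1 - (ω0 + ω1 * prevOutcome n xm1 X k)

/-- The number of heads in a sample path `X ∈ {-1,1}ⁿ`. -/
noncomputable def numHeads (n : ℕ) (X : Fin n → ({-1, 1} : Finset ℝ)) : ℕ :=
  (Finset.univ.filter fun k : Fin n => (X k : ℝ) = 1).card

/-! The probability of heads at flip `k` is `q_k = ω₀ + ω₁ X_{k-1}`, and averaging
`q_{k+1} = ω₀ + ω₁ X_k` over `X_k` gives `E q_{k+1} = (ω₀ - ω₁) + 2ω₁ E q_k`. This affine map has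
fixed point `p_∞`, so `E q_k = p_∞ + (2ω₁)ᵏ (p₀ - p_∞)`. Since `E(Hₙ) = Σ_{k<n} E q_k`, summing the
geometric series gives `E(Hₙ) = n p_∞ + (p₀ - p_∞)(1 - (2ω₁)ⁿ)/(1 - 2ω₁) = n (λₙ p₀ + (1 - λₙ) p_∞)`.
-/

abbrev CoinPath (n : ℕ) := Fin n → ({-1, 1} : Finset ℝ)

namespace CoinPath

def heads : ({-1, 1} : Finset ℝ) := ⟨1, by simp⟩

def tails : ({-1, 1} : Finset ℝ) := ⟨-1, by simp⟩

@[simp] theorem coe_heads : (heads : ℝ) = 1 := rfl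

@[simp] theorem coe_tails : (tails : ℝ) = -1 := rfl

theorem sum_outcome (g : ({-1, 1} : Finset ℝ) → ℝ) : ∑ a, g a = g heads + g tails := by
  refine Fintype.sum_eq_add _ _ (by simp [heads, tails, Subtype.ext_iff]; norm_num) ?_
  rintro ⟨a, ha⟩ ⟨h1, h2⟩
  simp only [heads, tails, ne_eq, Subtype.mk.injEq] at h1 h2
  simp only [Finset.mem_insert, Finset.mem_singleton] at ha
  tauto

theorem sum_snoc {n : ℕ} (f : CoinPath (n + 1) → ℝ) :
    ∑ X, f X = ∑ Y : CoinPath n, ∑ a, f (Fin.snoc Y a) := by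
  rw [← (Fin.snocEquiv fun _ => ({-1, 1} : Finset ℝ)).sum_comp f, Fintype.sum_prod_type,
    Finset.sum_comm]
  rfl

end CoinPath

open CoinPath

/-- `x₋₁` for the empty path. -/
noncomputable def lastOutcome (n : ℕ) (xm1 : ℝ) (Y : CoinPath n) : ℝ :=
  if _ : n = 0 then xm1 else (Y ⟨n - 1, by omega⟩ : ℝ)

noncomputable def nextHeadProb (n : ℕ) (ω0 ω1 xm1 : ℝ) (Y : CoinPath n) : ℝ :=
  ω0 + ω1 * lastOutcome n xm1 Y

section Snoc

variable {n : ℕ} (xm1 : ℝ) (Y : CoinPath n) (a : ({-1, 1} : Finset ℝ))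

theorem prevOutcome_snoc_castSucc (k : Fin n) :
    prevOutcome (n + 1) xm1 (Fin.snoc Y a) k.castSucc = prevOutcome n xm1 Y k := by
  by_cases hk : (k : ℕ) = 0
  · simp [prevOutcome, hk]
  · simp [prevOutcome, hk, Fin.snoc, show (k : ℕ) - 1 < n by omega]

theorem prevOutcome_snoc_last :
    prevOutcome (n + 1) xm1 (Fin.snoc Y a) (Fin.last n) = lastOutcome n xm1 Y := by
  rcases Nat.eq_zero_or_pos n with rfl | hn
  · simp [prevOutcome, lastOutcome]
  · simp [prevOutcome, lastOutcome, hn, hn.ne', Fin.snoc]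

theorem lastOutcome_snoc : lastOutcome (n + 1) xm1 (Fin.snoc Y a) = a := by
  simp [lastOutcome, Fin.snoc]

variable (ω0 ω1 : ℝ)

theorem coinPathProb_snoc :
    coinPathProb (n + 1) ω0 ω1 xm1 (Fin.snoc Y a) = coinPathProb n ω0 ω1 xm1 Y *
      if (a : ℝ) = 1 then nextHeadProb n ω0 ω1 xm1 Y else 1 - nextHeadProb n ω0 ω1 xm1 Y := by
  simp only [coinPathProb, Fin.prod_univ_castSucc, Fin.snoc_castSucc, Fin.snoc_last,
    prevOutcome_snoc_castSucc, prevOutcome_snoc_last, nextHeadProb]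

theorem numHeads_snoc :
    (numHeads (n + 1) (Fin.snoc Y a) : ℝ) = numHeads n Y + if (a : ℝ) = 1 then 1 else 0 := by
  simp only [numHeads, Finset.card_filter, Fin.sum_univ_castSucc, Fin.snoc_castSucc,
    Fin.snoc_last]
  push_cast
  rfl

end Snoc

section Expectation

variable (ω0 ω1 xm1 : ℝ)

theorem sum_coinPathProb_succ_mul {n : ℕ} (f : CoinPath (n + 1) → ℝ) :
    ∑ X, coinPathProb (n + 1) ω0 ω1 xm1 X * f X
      = ∑ Y, coinPathProb n ω0 ω1 xm1 Y * (nextHeadProb n ω0 ω1 xm1 Y * f (Fin.snoc Y heads)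
          + (1 - nextHeadProb n ω0 ω1 xm1 Y) * f (Fin.snoc Y tails)) := by
  rw [sum_snoc]
  refine Finset.sum_congr rfl fun Y _ => ?_
  rw [sum_outcome, coinPathProb_snoc, coinPathProb_snoc, coe_heads, coe_tails, if_pos rfl,
    if_neg (by norm_num)]
  ring

theorem sum_coinPathProb (n : ℕ) : ∑ X, coinPathProb n ω0 ω1 xm1 X = 1 := by
  induction n with
  | zero => simp [coinPathProb]
  | succ n ih => simpa [ih] using sum_coinPathProb_succ_mul ω0 ω1 xm1 (n := n) fun _ => 1

theorem sum_coinPathProb_mul_nextHeadProb {pinf : ℝ} (hfix : pinf * (1 - 2 * ω1) = ω0 - ω1)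
    (n : ℕ) : ∑ Y, coinPathProb n ω0 ω1 xm1 Y * nextHeadProb n ω0 ω1 xm1 Y
      = pinf + (2 * ω1) ^ n * (ω0 + ω1 * xm1 - pinf) := by
  induction n with
  | zero => simp [coinPathProb, nextHeadProb, lastOutcome]
  | succ n ih =>
    have step : ∀ Y : CoinPath n, coinPathProb n ω0 ω1 xm1 Y *
        (nextHeadProb n ω0 ω1 xm1 Y * nextHeadProb (n + 1) ω0 ω1 xm1 (Fin.snoc Y heads)
          + (1 - nextHeadProb n ω0 ω1 xm1 Y) * nextHeadProb (n + 1) ω0 ω1 xm1 (Fin.snoc Y tails))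
        = (ω0 - ω1) * coinPathProb n ω0 ω1 xm1 Y
          + 2 * ω1 * (coinPathProb n ω0 ω1 xm1 Y * nextHeadProb n ω0 ω1 xm1 Y) := by
      intro Y
      simp only [nextHeadProb, lastOutcome_snoc, coe_heads, coe_tails]
      ring
    rw [sum_coinPathProb_succ_mul, Finset.sum_congr rfl fun Y _ => step Y, Finset.sum_add_distrib,
      ← Finset.mul_sum, ← Finset.mul_sum, sum_coinPathProb, ih]
    linear_combination -hfix

theorem sum_coinPathProb_mul_numHeads (n : ℕ) :
    ∑ X, coinPathProb n ω0 ω1 xm1 X * numHeads n X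
      = ∑ k ∈ Finset.range n, ∑ Y, coinPathProb k ω0 ω1 xm1 Y * nextHeadProb k ω0 ω1 xm1 Y := by
  induction n with
  | zero => simp [numHeads]
  | succ n ih =>
    have step : ∀ Y : CoinPath n, coinPathProb n ω0 ω1 xm1 Y *
        (nextHeadProb n ω0 ω1 xm1 Y * numHeads (n + 1) (Fin.snoc Y heads)
          + (1 - nextHeadProb n ω0 ω1 xm1 Y) * numHeads (n + 1) (Fin.snoc Y tails))
        = coinPathProb n ω0 ω1 xm1 Y * numHeads n Y
          + coinPathProb n ω0 ω1 xm1 Y * nextHeadProb n ω0 ω1 xm1 Y := by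
      intro Y
      rw [numHeads_snoc, numHeads_snoc, coe_heads, coe_tails, if_pos rfl, if_neg (by norm_num)]
      ring
    rw [sum_coinPathProb_succ_mul, Finset.sum_congr rfl fun Y _ => step Y, Finset.sum_add_distrib,
      ih, Finset.sum_range_succ]

end Expectation

theorem expected_heads_convex_combination_general (n : ℕ) (hn : 1 ≤ n) (ω0 ω1 xm1 : ℝ)
    (hdiamond : |ω0 - 1/2| + |ω1| < 1/2)
    (p0 pinf lam : ℝ)
    (hp0 : p0 = ω0 + ω1 * xm1)
    (hpinf : pinf = (ω0 - ω1) / (1 - 2 * ω1))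
    (hlam : lam = (1 / (n : ℝ)) * ((1 - (2 * ω1) ^ n) / (1 - 2 * ω1))) :
    (∑ X, coinPathProb n ω0 ω1 xm1 X * (numHeads n X : ℝ)) / n
      = lam * p0 + (1 - lam) * pinf := by
  have hω1 : 2 * ω1 < 1 := by linarith [abs_nonneg (ω0 - 1/2), le_abs_self ω1]
  have h1 : 1 - 2 * ω1 ≠ 0 := by linarith
  have hfix : pinf * (1 - 2 * ω1) = ω0 - ω1 := by rw [hpinf, div_mul_cancel₀ _ h1]
  have hn' : (n : ℝ) ≠ 0 := Nat.cast_ne_zero.mpr (by omega)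
  rw [sum_coinPathProb_mul_numHeads, Finset.sum_congr rfl fun k _ =>
    sum_coinPathProb_mul_nextHeadProb ω0 ω1 xm1 hfix k, Finset.sum_add_distrib, ← Finset.sum_mul,
    geom_sum_eq hω1.ne, Finset.sum_const, Finset.card_range, ← hp0, hlam]
  field_simp [sub_ne_zero.mpr hω1.ne]
  ring

/-- For the history-cognizant coin of memory depth 1, the expected fraction of heads is the
convex combination `E(Hₙ)/n = λₙ·p₀ + (1-λₙ)·p_∞`. -/
theorem expected_heads_convex_combination (n : ℕ) (hn : 1 ≤ n) (ω0 ω1 xm1 : ℝ)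
    (hdiamond : |ω0 - 1/2| + |ω1| < 1/2)
    (hx : xm1 = 1 ∨ xm1 = -1)
    (p0 pinf lam : ℝ)
    (hp0 : p0 = ω0 + ω1 * xm1)
    (hpinf : pinf = (ω0 - ω1) / (1 - 2 * ω1))
    (hlam : lam = (1 / (n : ℝ)) * ((1 - (2 * ω1) ^ n) / (1 - 2 * ω1))) :
    (∑ X, coinPathProb n ω0 ω1 xm1 X * (numHeads n X : ℝ)) / n
      = lam * p0 + (1 - lam) * pinf :=
  expected_heads_convex_combination_general n hn ω0 ω1 xm1 hdiamond p0 pinf lam hp0 hpinf hlam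
end

section
/- Let n ≥ 1 and let P : {−1,1}ⁿ → ℝ be any probability mass function on sample paths. For 0 ≤ k ≤ n−1 let p_k = Σ_{X : X_k = 1} P(X), and assume 0 < p_k < 1 for every k. Then the time-varying expected logarithmic growth ELG(𝐊) = (1/n) Σ_X P(X) Σ_{k=0}^{n−1} log(1 + K̃_k·X_k) attains its unique maximum over 𝐊 ∈ (−1,1)ⁿ at the vector with components K̃_k = 2p_k − 1; i.e., ELG(𝐊) < ELG((2p₀−1,…,2p_{n−1}−1)) for every other 𝐊 ∈ (−1,1)ⁿ. -/
/-!
Because the logarithm of a product of wealth factors is a sum, ELG(𝐊) splits into one term per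
flip, and the `k`-th term depends on `P` only through the marginal `p_k`: it is the one-flip
Kelly growth `p_k log(1 + K_k) + (1 - p_k) log(1 - K_k)`. Each of these is strictly maximised at
`K_k = 2p_k - 1` by Gibbs' inequality `b log a < b log b + (a - b)` (for `a ≠ b`), applied to
`(a, b) = (1 + K_k, 2p_k)` and `(1 - K_k, 2 - 2p_k)`: the two slack terms `a - b` cancel.
-/

open Finset

/-- The unconditional probability `p_k = Σ_{X : X_k = 1} P(X)` of a head on flip `k`
under an arbitrary probability mass function `P` on sample paths in `{-1,1}ⁿ`. -/
noncomputable def headProbOf (n : ℕ) (P : (Fin n → ({-1, 1} : Finset ℝ)) → ℝ)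
    (k : Fin n) : ℝ :=
  ∑ X ∈ Finset.univ.filter (fun X : Fin n → ({-1, 1} : Finset ℝ) => (X k : ℝ) = 1), P X

open Real

theorem mul_log_lt_mul_log_add_sub {a b : ℝ} (ha : 0 < a) (hb : 0 < b) (hab : a ≠ b) :
    b * log a < b * log b + (a - b) := by
  have hlog : log (a / b) < a / b - 1 :=
    log_lt_sub_one_of_pos (div_pos ha hb) (by rwa [Ne, div_eq_one_iff_eq hb.ne'])
  rw [log_div ha.ne' hb.ne'] at hlog
  have := mul_lt_mul_of_pos_left hlog hb
  rw [mul_sub, mul_sub, mul_div_cancel₀ a hb.ne'] at this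
  linarith

noncomputable def kellyGrowth (p K : ℝ) : ℝ :=
  p * log (1 + K) + (1 - p) * log (1 - K)

theorem kellyGrowth_lt_of_ne {p K : ℝ} (hp₀ : 0 < p) (hp₁ : p < 1) (hK : K ∈ Set.Ioo (-1 : ℝ) 1)
    (hne : K ≠ 2 * p - 1) : kellyGrowth p K < kellyGrowth p (2 * p - 1) := by
  obtain ⟨hK₀, hK₁⟩ := hK
  have head := mul_log_lt_mul_log_add_sub (a := 1 + K) (b := 2 * p) (by linarith) (by linarith)
    (fun h => hne (by linarith))
  have tail := mul_log_lt_mul_log_add_sub (a := 1 - K) (b := 2 - 2 * p) (by linarith)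
    (by linarith) (fun h => hne (by linarith))
  unfold kellyGrowth
  rw [show 1 + (2 * p - 1) = 2 * p by ring, show 1 - (2 * p - 1) = 2 - 2 * p by ring]
  linarith

theorem kellyGrowth_le {p K : ℝ} (hp₀ : 0 < p) (hp₁ : p < 1) (hK : K ∈ Set.Ioo (-1 : ℝ) 1) :
    kellyGrowth p K ≤ kellyGrowth p (2 * p - 1) := by
  rcases eq_or_ne K (2 * p - 1) with rfl | hne
  · exact le_rfl
  · exact (kellyGrowth_lt_of_ne hp₀ hp₁ hK hne).le

section Marginal

variable {n : ℕ} {P : (Fin n → ({-1, 1} : Finset ℝ)) → ℝ}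

theorem sum_mul_apply_eq_headProbOf (hP : ∑ X, P X = 1) (k : Fin n) (f : ℝ → ℝ) :
    ∑ X, P X * f (X k) = headProbOf n P k * f 1 + (1 - headProbOf n P k) * f (-1) := by
  have htail : ∑ X ∈ univ.filter (fun X : Fin n → ({-1, 1} : Finset ℝ) => ¬ (X k : ℝ) = 1), P X
      = 1 - headProbOf n P k := by
    have := sum_filter_add_sum_filter_not univ (fun X => (X k : ℝ) = 1) P
    rw [headProbOf]
    linarith
  rw [← htail, headProbOf, ← sum_filter_add_sum_filter_not univ (fun X => (X k : ℝ) = 1),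
    sum_mul, sum_mul]
  congr 1 <;> refine sum_congr rfl fun X hX => ?_
  · rw [(mem_filter.mp hX).2, mul_comm]
  · have hX_neg : (X k : ℝ) = -1 := by
      have hmem := (X k).2
      simp only [mem_insert, mem_singleton] at hmem
      exact hmem.resolve_right (mem_filter.mp hX).2
    rw [hX_neg, mul_comm]

theorem sum_mul_sum_log_eq_sum_kellyGrowth (hP : ∑ X, P X = 1) (K : Fin n → ℝ) :
    ∑ X, P X * ∑ k, log (1 + K k * (X k : ℝ)) = ∑ k, kellyGrowth (headProbOf n P k) (K k) := by
  simp_rw [mul_sum]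
  rw [sum_comm]
  refine sum_congr rfl fun k _ => ?_
  rw [sum_mul_apply_eq_headProbOf hP k (fun x => log (1 + K k * x)), kellyGrowth]
  simp only [mul_one, mul_neg_one, ← sub_eq_add_neg]

end Marginal

theorem time_varying_elg_unique_max_general (n : ℕ)
    (P : (Fin n → ({-1, 1} : Finset ℝ)) → ℝ)
    (hP1 : ∑ X, P X = 1)
    (hp : ∀ k : Fin n, 0 < headProbOf n P k ∧ headProbOf n P k < 1) :
    (∀ k : Fin n, (2 * headProbOf n P k - 1) ∈ Set.Ioo (-1 : ℝ) 1) ∧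
    ∀ K : Fin n → ℝ, (∀ k, K k ∈ Set.Ioo (-1 : ℝ) 1) →
      K ≠ (fun k => 2 * headProbOf n P k - 1) →
      (1 / (n : ℝ)) * ∑ X, P X * ∑ k : Fin n, Real.log (1 + K k * (X k : ℝ))
        < (1 / (n : ℝ)) * ∑ X, P X *
            ∑ k : Fin n, Real.log (1 + (2 * headProbOf n P k - 1) * (X k : ℝ)) := by
  refine ⟨fun k => ⟨by linarith [(hp k).1], by linarith [(hp k).2]⟩, fun K hK hKne => ?_⟩
  obtain ⟨k₀, hk₀⟩ := Function.ne_iff.mp hKne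
  have hn : (0 : ℝ) < n := Nat.cast_pos.mpr k₀.pos
  rw [sum_mul_sum_log_eq_sum_kellyGrowth hP1, sum_mul_sum_log_eq_sum_kellyGrowth hP1]
  refine mul_lt_mul_of_pos_left ?_ (by positivity)
  exact sum_lt_sum (fun k _ => kellyGrowth_le (hp k).1 (hp k).2 (hK k))
    ⟨k₀, mem_univ k₀, kellyGrowth_lt_of_ne (hp k₀).1 (hp k₀).2 (hK k₀) hk₀⟩

/-- If `0 < pₖ < 1` for all `k`, the time-varying expected logarithmic growth attains its
unique maximum over `𝐊 ∈ (-1,1)ⁿ` at the vector with components `K̃ₖ = 2pₖ - 1`. -/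
theorem time_varying_elg_unique_max (n : ℕ) (hn : 1 ≤ n)
    (P : (Fin n → ({-1, 1} : Finset ℝ)) → ℝ)
    (hP0 : ∀ X, 0 ≤ P X)
    (hP1 : ∑ X, P X = 1)
    (hp : ∀ k : Fin n, 0 < headProbOf n P k ∧ headProbOf n P k < 1) :
    (∀ k : Fin n, (2 * headProbOf n P k - 1) ∈ Set.Ioo (-1 : ℝ) 1) ∧
    ∀ K : Fin n → ℝ, (∀ k, K k ∈ Set.Ioo (-1 : ℝ) 1) →
      K ≠ (fun k => 2 * headProbOf n P k - 1) →
      (1 / (n : ℝ)) * ∑ X, P X * ∑ k : Fin n, Real.log (1 + K k * (X k : ℝ))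
        < (1 / (n : ℝ)) * ∑ X, P X *
            ∑ k : Fin n, Real.log (1 + (2 * headProbOf n P k - 1) * (X k : ℝ)) :=
  time_varying_elg_unique_max_general n P hP1 hp
end
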